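/- arXiv:2501.10028 — 7 statements merged into one kernel-verified Lean document; each statement's English description precedes it below -/
import Mathlib

section
/- For all integers d ≥ 0, ℓ ≥ 0 and all z ∈ ℂ, the series Σ_{i=2d+1}^∞ ((−1)^d d! (d+ℓ)! / ((2d+ℓ)! (ℓ+i)!)) · C(i−(d+1), d) · z^i converges and φ_ℓ(z) · D̂_{d,ℓ}(z) − N̂_{d,ℓ}(z) = Σ_{i=2d+1}^∞ ((−1)^d d! (d+ℓ)! / ((2d+ℓ)! (ℓ+i)!)) · C(i−(d+1), d) · z^i. -/
/-!
`φ_ℓ · D̂_{d,ℓ}` is the Cauchy product of the power series of `φ_ℓ` with a polynomial of degree `d`,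
and `N̂_{d,ℓ}` is exactly its truncation to degree `d`. After reflecting the summation index, the
coefficient of `z^(m+d+1)` is `1/(2d+ℓ)!` times the `d`-th forward difference at `0` of
`j ↦ (d+ℓ+j)!/(ℓ+m+1+j)!`. Each forward difference of `j ↦ (a+j)!/(b+j)!` multiplies it by `a - b`
and raises `b` by one, so this `d`-th difference is the falling factorial
`(d-m-1)(d-m-2)⋯(-m) = (-1)^d d! C(m,d)` times `(d+ℓ)!/(d+ℓ+m+1)!`; it vanishes for `m < d`,
which is why the series starts at `z^(2d+1)`.
-/

open Finset

/-- For an integer `ℓ ≥ 0` and `z ∈ ℂ`, `φ_ℓ(z) := Σ_{k=0}^∞ z^k/(ℓ+k)!`. -/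
noncomputable def phiC (ℓ : ℕ) (z : ℂ) : ℂ := ∑' k : ℕ, z ^ k / ((ℓ + k).factorial : ℂ)

/-- The Padé numerator
`N̂_{d,ℓ}(z) := (d!/(2d+ℓ)!) Σ_{i=0}^{d} [Σ_{j=0}^{i} ((2d+ℓ−j)! (−1)^j)/(j!(d−j)!(ℓ+i−j)!)] z^i`. -/
noncomputable def Nhat (d ℓ : ℕ) (z : ℂ) : ℂ :=
  ((d.factorial : ℂ) / ((2 * d + ℓ).factorial : ℂ)) *
    ∑ i ∈ Finset.range (d + 1),
      (∑ j ∈ Finset.range (i + 1),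
        (((2 * d + ℓ - j).factorial : ℂ) * (-1 : ℂ) ^ j) /
          ((j.factorial : ℂ) * ((d - j).factorial : ℂ) * ((ℓ + i - j).factorial : ℂ))) * z ^ i

/-- The Padé denominator
`D̂_{d,ℓ}(z) := (d!/(2d+ℓ)!) Σ_{i=0}^{d} ((2d+ℓ−i)!/(i!(d−i)!)) (−z)^i`. -/
noncomputable def Dhat (d ℓ : ℕ) (z : ℂ) : ℂ :=
  ((d.factorial : ℂ) / ((2 * d + ℓ).factorial : ℂ)) *
    ∑ i ∈ Finset.range (d + 1),
      (((2 * d + ℓ - i).factorial : ℂ) / ((i.factorial : ℂ) * ((d - i).factorial : ℂ))) * (-z) ^ i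

open Nat fwdDiff

theorem HasSum.polynomial_mul {R : Type*} [CommRing R] [TopologicalSpace R] [IsTopologicalRing R]
    {a : ℕ → R} {z A : R} (h : HasSum (fun k => a k * z ^ k) A) (c : ℕ → R) (s : Finset ℕ) :
    HasSum (fun i => (∑ j ∈ s, if j ≤ i then c j * a (i - j) else 0) * z ^ i)
      ((∑ j ∈ s, c j * z ^ j) * A) := by
  simp only [Finset.sum_mul]
  refine hasSum_sum fun j _ => ?_
  have hlow : ∑ i ∈ range j, (if j ≤ i then c j * a (i - j) else 0) * z ^ i = 0 :=
    sum_eq_zero fun i hi => by rw [if_neg (by simpa using hi), zero_mul]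
  have hshift : (fun n => (if j ≤ n + j then c j * a (n + j - j) else 0) * z ^ (n + j)) =
      fun n => c j * z ^ j * (a n * z ^ n) := by
    funext n
    rw [if_pos (Nat.le_add_left j n), Nat.add_sub_cancel, pow_add]
    ring
  rw [← hasSum_nat_add_iff' j, hlow, sub_zero, hshift]
  exact h.mul_left _

lemma fwdDiff_factorial_div_factorial (a b : ℕ) :
    Δ_[1] (fun j : ℕ => ((a + j)! : ℂ) / (b + j)!) =
      fun j => ((a : ℂ) - b) * (((a + j)! : ℂ) / (b + 1 + j)!) := by
  funext j
  simp only [fwdDiff, show a + (j + 1) = a + j + 1 by omega, show b + (j + 1) = b + j + 1 by omega,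
    show b + 1 + j = b + j + 1 by omega, factorial_succ]
  push_cast
  have hb : ((b + j)! : ℂ) ≠ 0 := by exact_mod_cast factorial_ne_zero _
  have hb' : (b : ℂ) + j + 1 ≠ 0 := by norm_cast
  field_simp
  ring

lemma fwdDiff_iter_factorial_div_factorial (a b k : ℕ) :
    (Δ_[1])^[k] (fun j : ℕ => ((a + j)! : ℂ) / (b + j)!) =
      fun j => (descPochhammer ℂ k).eval ((a : ℂ) - b) * (((a + j)! : ℂ) / (b + k + j)!) := by
  induction k with
  | zero => simp
  | succ k ih =>
    rw [Function.iterate_succ_apply', ih]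
    funext j
    have h := congrFun (fwdDiff_factorial_div_factorial a (b + k)) j
    simp only [fwdDiff] at h ⊢
    rw [← mul_sub, h, descPochhammer_succ_eval, show b + (k + 1) + j = b + k + 1 + j by omega]
    push_cast
    ring

lemma descPochhammer_eval_sub_succ {R : Type*} [CommRing R] (d m : ℕ) :
    (descPochhammer R d).eval ((d : R) - (m + 1)) = (-1) ^ d * m.descFactorial d := by
  rw [descPochhammer_eval_eq_ascPochhammer, show (d : R) - (m + 1) - d + 1 = -m by ring,
    ascPochhammer_eval_neg_eq_descPochhammer, descPochhammer_eval_eq_descFactorial]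

lemma fwdDiff_iter_factorial_div_factorial_zero (d ℓ m : ℕ) :
    (Δ_[1])^[d] (fun j : ℕ => ((d + ℓ + j)! : ℂ) / (ℓ + m + 1 + j)!) 0 =
      (-1) ^ d * d ! * m.choose d * (d + ℓ)! / (d + ℓ + m + 1)! := by
  rw [fwdDiff_iter_factorial_div_factorial, show ((d + ℓ : ℕ) : ℂ) - (ℓ + m + 1 : ℕ) = d - (m + 1) by
    push_cast; ring, descPochhammer_eval_sub_succ, descFactorial_eq_factorial_mul_choose,
    show ℓ + m + 1 + d = d + ℓ + m + 1 by omega]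
  simp only [add_zero, cast_mul]
  ring

noncomputable def dhatCoeff (d ℓ j : ℕ) : ℂ :=
  d ! / (2 * d + ℓ)! * ((2 * d + ℓ - j)! / (j ! * (d - j)!)) * (-1) ^ j

noncomputable def phiDhatCoeff (d ℓ i : ℕ) : ℂ :=
  ∑ j ∈ range (d + 1), if j ≤ i then dhatCoeff d ℓ j * ((ℓ + (i - j))! : ℂ)⁻¹ else 0

lemma hasSum_phiC (ℓ : ℕ) (z : ℂ) : HasSum (fun k => ((ℓ + k)! : ℂ)⁻¹ * z ^ k) (phiC ℓ z) := by
  have hs : Summable fun k : ℕ => z ^ k / (ℓ + k)! := by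
    refine Summable.of_norm_bounded (Real.summable_pow_div_factorial ‖z‖) fun k => ?_
    simp only [norm_div, norm_pow, Complex.norm_natCast]
    gcongr
    exact Nat.le_add_left k ℓ
  simpa only [inv_mul_eq_div, phiC] using hs.hasSum

lemma Dhat_eq_sum (d ℓ : ℕ) (z : ℂ) : Dhat d ℓ z = ∑ j ∈ range (d + 1), dhatCoeff d ℓ j * z ^ j := by
  rw [Dhat, mul_sum]
  refine sum_congr rfl fun j _ => ?_
  rw [dhatCoeff, neg_pow]
  ring

lemma hasSum_phiDhatCoeff (d ℓ : ℕ) (z : ℂ) :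
    HasSum (fun i => phiDhatCoeff d ℓ i * z ^ i) (phiC ℓ z * Dhat d ℓ z) := by
  rw [mul_comm, Dhat_eq_sum]
  exact (hasSum_phiC ℓ z).polynomial_mul _ _

lemma Nhat_eq_sum_phiDhatCoeff (d ℓ : ℕ) (z : ℂ) :
    Nhat d ℓ z = ∑ i ∈ range (d + 1), phiDhatCoeff d ℓ i * z ^ i := by
  rw [Nhat, mul_sum]
  refine sum_congr rfl fun i hi => ?_
  have hid : i + 1 ≤ d + 1 := by simpa using hi
  rw [phiDhatCoeff, ← sum_subset (range_subset_range.mpr hid)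
    fun j _ hj => if_neg (by simp at hj; omega), ← mul_assoc, mul_sum]
  refine congrArg (· * z ^ i) (sum_congr rfl fun j hj => ?_)
  have hji : j ≤ i := by simpa [Nat.lt_succ_iff] using hj
  rw [if_pos hji, dhatCoeff, show ℓ + (i - j) = ℓ + i - j by omega]
  field_simp

lemma phiDhatCoeff_add_succ (d ℓ m : ℕ) :
    phiDhatCoeff d ℓ (m + (d + 1)) =
      (-1) ^ d * d ! * (d + ℓ)! / ((2 * d + ℓ)! * (d + ℓ + m + 1)!) * m.choose d := by
  set F := fun j : ℕ => ((d + ℓ + j)! : ℂ) / (ℓ + m + 1 + j)!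
  have hterm : ∀ k ∈ range (d + 1),
      dhatCoeff d ℓ (d - k) * ((ℓ + (m + (d + 1) - (d - k)))! : ℂ)⁻¹ =
        ((2 * d + ℓ)! : ℂ)⁻¹ * (((-1 : ℤ) ^ (d - k) * d.choose k) • F (0 + k • 1)) := by
    intro k hk
    have hkd : k ≤ d := by simpa [Nat.lt_succ_iff] using hk
    rw [dhatCoeff, show 2 * d + ℓ - (d - k) = d + ℓ + k by omega, show d - (d - k) = k by omega,
      show ℓ + (m + (d + 1) - (d - k)) = ℓ + m + 1 + k by omega, zero_add, smul_eq_mul, mul_one,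
      zsmul_eq_mul]
    push_cast
    rw [Nat.cast_choose ℂ hkd]
    simp only [F]
    field_simp
  calc phiDhatCoeff d ℓ (m + (d + 1))
      = ∑ j ∈ range (d + 1), dhatCoeff d ℓ j * ((ℓ + (m + (d + 1) - j))! : ℂ)⁻¹ :=
        sum_congr rfl fun j hj => if_pos (by simp at hj; omega)
    _ = ((2 * d + ℓ)! : ℂ)⁻¹ * (Δ_[1])^[d] F 0 := by
        rw [← sum_range_reflect, fwdDiff_iter_eq_sum_shift, mul_sum]
        exact sum_congr rfl fun k hk => by
          rw [show d + 1 - 1 - k = d - k by omega]; exact hterm k hk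
    _ = _ := by
        rw [fwdDiff_iter_factorial_div_factorial_zero]
        field_simp

/-- For all integers `d ≥ 0`, `ℓ ≥ 0` and `z ∈ ℂ`, the series
`Σ_{i=2d+1}^∞ ((−1)^d d! (d+ℓ)!/((2d+ℓ)!(ℓ+i)!)) C(i−(d+1), d) z^i`
converges to `φ_ℓ(z)·D̂_{d,ℓ}(z) − N̂_{d,ℓ}(z)` (the series is indexed by `i = n + (2d+1)`,
`n ∈ ℕ`). -/
theorem stmt4 (d ℓ : ℕ) (z : ℂ) :
    HasSum
      (fun n : ℕ =>
        ((-1 : ℂ) ^ d * (d.factorial : ℂ) * ((d + ℓ).factorial : ℂ) /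
            (((2 * d + ℓ).factorial : ℂ) * ((ℓ + (n + (2 * d + 1))).factorial : ℂ))) *
          (((n + (2 * d + 1) - (d + 1)).choose d : ℕ) : ℂ) * z ^ (n + (2 * d + 1)))
      (phiC ℓ z * Dhat d ℓ z - Nhat d ℓ z) := by
  have htail := (hasSum_nat_add_iff' (d + 1)).mpr (hasSum_phiDhatCoeff d ℓ z)
  rw [← Nhat_eq_sum_phiDhatCoeff] at htail
  have hvanish : ∑ n ∈ range d, phiDhatCoeff d ℓ (n + (d + 1)) * z ^ (n + (d + 1)) = 0 :=
    sum_eq_zero fun n hn => by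
      rw [phiDhatCoeff_add_succ, choose_eq_zero_of_lt (by simpa using hn), cast_zero, mul_zero,
        zero_mul]
  have h := (hasSum_nat_add_iff' d).mpr htail
  rw [hvanish, sub_zero] at h
  refine h.congr_fun fun n => ?_
  rw [phiDhatCoeff_add_succ, show n + (2 * d + 1) = n + d + (d + 1) by omega,
    show ℓ + (n + d + (d + 1)) = d + ℓ + (n + d) + 1 by omega, Nat.add_sub_cancel]
end

section
/- For all integers d ≥ 0, ℓ ≥ 0, the function z ↦ φ_ℓ(z) · D̂_{d,ℓ}(z) − N̂_{d,ℓ}(z) − ((−1)^d d! (d+ℓ)! / ((2d+ℓ)! (2d+ℓ+1)!)) z^{2d+1} vanishes to order at least 2d+2 at z = 0; that is, there exist constants C > 0 and δ > 0 such that |φ_ℓ(z) D̂_{d,ℓ}(z) − N̂_{d,ℓ}(z) − ((−1)^d d! (d+ℓ)!/((2d+ℓ)! (2d+ℓ+1)!)) z^{2d+1}| ≤ C |z|^{2d+2} for all |z| ≤ δ. -/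
open Finset

/-!
Write `D̂_{d,ℓ}(z) = ∑ᵢ aᵢ zⁱ` with `aᵢ = (-1)ⁱ C(d,i) (2d+ℓ-i)! / (2d+ℓ)!`, so that the
coefficient of `zⁿ` in `φ_ℓ D̂_{d,ℓ}` is `cₙ = ∑ᵢ aᵢ / (ℓ+n-i)!`. For `n ≤ d` this is the
coefficient of `N̂_{d,ℓ}`. For `d < n ≤ 2d+1`, `(2d+ℓ)! cₙ = ∑ᵢ (-1)ⁱ C(d,i) (2d+ℓ-i)!/(ℓ+n-i)!`
is a `d`-th forward difference: of a polynomial of degree `2d-n < d` when `n ≤ 2d`, hence zero,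
and of `x ↦ 1/x` when `n = 2d+1`, which gives the constant of the statement. Since
`φ_ℓ(z) = ∑_{k<m} z^k/(ℓ+k)! + z^m φ_{ℓ+m}(z)`, what is left is `z^{2d+2}` times a combination
of the functions `φ_{ℓ+m}`, each bounded by `e^{|z|}`.
-/

open fwdDiff

theorem sum_range_alternating_choose_mul_eq_fwdDiff_iter {R : Type*} [CommRing R]
    (f : ℕ → R) (d y : ℕ) :
    ∑ i ∈ range (d + 1), (-1 : R) ^ i * d.choose i * f (y + (d - i)) = Δ_[1] ^[d] f y := by
  rw [fwdDiff_iter_eq_sum_shift, ← sum_range_reflect]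
  refine sum_congr rfl fun i hi ↦ ?_
  have hi : i ≤ d := Nat.lt_succ_iff.mp (mem_range.mp hi)
  rw [zsmul_eq_mul, Nat.add_sub_cancel, Nat.sub_sub_self hi, Nat.choose_symm hi, smul_eq_mul,
    mul_one]
  push_cast
  ring

theorem fwdDiff_iter_natCast_choose_eq_zero {R : Type*} [CommRing R] {r d : ℕ} (h : r < d) :
    Δ_[1] ^[d] (fun x : ℕ ↦ (x.choose r : R)) = 0 := by
  have hchoose (j : ℕ) :
      Δ_[1] (fun x : ℕ ↦ (x.choose (j + 1) : R)) = fun x ↦ (x.choose j : R) := by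
    ext x
    simp only [fwdDiff, Nat.choose_succ_succ' x j, Nat.cast_add, add_sub_cancel_right]
  have hiter (k j : ℕ) :
      Δ_[1] ^[k] (fun x : ℕ ↦ (x.choose (k + j) : R)) = fun x ↦ (x.choose j : R) := by
    induction k generalizing j with
    | zero => simp
    | succ k ih => rw [Function.iterate_succ_apply, add_right_comm, hchoose, ih]
  obtain ⟨k, rfl⟩ := Nat.exists_eq_add_of_lt h
  have hr := hiter r 0
  simp only [add_zero, Nat.choose_zero_right, Nat.cast_one] at hr
  rw [show r + k + 1 = k + 1 + r by ring, Function.iterate_add_apply, hr,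
    Function.iterate_succ_apply, fwdDiff_const]
  exact Function.iterate_fixed (fwdDiff_const 1 0) k

theorem fwdDiff_iter_natCast_inv {K : Type*} [Field K] [CharZero K] (n m : ℕ) :
    Δ_[1] ^[n] (fun x : ℕ ↦ (x : K)⁻¹) (m + 1) =
      (-1) ^ n * n.factorial * m.factorial / (m + n + 1).factorial := by
  have hfac (k : ℕ) : (k.factorial : K) ≠ 0 := Nat.cast_ne_zero.2 k.factorial_ne_zero
  induction n generalizing m with
  | zero =>
    rw [Function.iterate_zero_apply, add_zero, Nat.factorial_succ, Nat.cast_mul]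
    field_simp [hfac m]
    simp
  | succ n ih =>
    rw [Function.iterate_succ_apply', fwdDiff, ih (m + 1), ih m,
      show m + 1 + n + 1 = m + n + 1 + 1 by ring, show m + (n + 1) + 1 = m + n + 1 + 1 by ring]
    simp only [Nat.factorial_succ (m + n + 1), Nat.factorial_succ m, Nat.factorial_succ n,
      Nat.cast_mul]
    have hpos : (m + n + 1 + 1 : K) ≠ 0 := by exact_mod_cast (m + n + 1).succ_ne_zero
    push_cast
    field_simp [hfac (m + n + 1)]
    ring

theorem summable_phiC_terms (ℓ : ℕ) (z : ℂ) :
    Summable fun k : ℕ ↦ z ^ k / (ℓ + k).factorial := by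
  refine Summable.of_norm_bounded (Real.summable_pow_div_factorial ‖z‖) fun k ↦ ?_
  rw [norm_div, norm_pow, Complex.norm_natCast]
  gcongr
  exact Nat.le_add_left k ℓ

theorem norm_phiC_le (ℓ : ℕ) (z : ℂ) : ‖phiC ℓ z‖ ≤ Real.exp ‖z‖ := by
  rw [Real.exp_eq_exp_ℝ]
  refine tsum_of_norm_bounded (NormedSpace.expSeries_div_hasSum_exp ‖z‖) fun k ↦ ?_
  rw [norm_div, norm_pow, Complex.norm_natCast]
  gcongr
  exact Nat.le_add_left k ℓ

theorem phiC_eq_sum_range_add (ℓ m : ℕ) (z : ℂ) :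
    phiC ℓ z = ∑ k ∈ range m, z ^ k / (ℓ + k).factorial + z ^ m * phiC (ℓ + m) z := by
  rw [phiC, ← (summable_phiC_terms ℓ z).sum_add_tsum_nat_add m, phiC, ← tsum_mul_left]
  congr 1
  refine tsum_congr fun k ↦ ?_
  rw [pow_add, add_comm k m, ← add_assoc]
  ring

theorem phiC_mul_sum_range (ℓ N : ℕ) (a : ℕ → ℂ) (z : ℂ) :
    phiC ℓ z * ∑ i ∈ range N, a i * z ^ i =
      ∑ n ∈ range N, (∑ i ∈ range (n + 1), a i / (ℓ + (n - i)).factorial) * z ^ n +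
        z ^ N * ∑ i ∈ range N, a i * phiC (ℓ + (N - i)) z := by
  have hsplit : ∀ i ∈ range N, phiC ℓ z * (a i * z ^ i) =
      ∑ k ∈ range (N - i), a i / (ℓ + k).factorial * z ^ (i + k) +
        z ^ N * (a i * phiC (ℓ + (N - i)) z) := by
    intro i hi
    rw [phiC_eq_sum_range_add ℓ (N - i), add_mul, sum_mul]
    have hN : z ^ N = z ^ i * z ^ (N - i) := by
      rw [← pow_add, Nat.add_sub_cancel' (mem_range.mp hi).le]
    congr 1
    · refine sum_congr rfl fun k _ ↦ ?_
      rw [pow_add]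
      ring
    · rw [hN]
      ring
  rw [mul_sum, sum_congr rfl hsplit, sum_add_distrib, ← mul_sum, ← sum_range_diag_flip]
  congr 1
  refine sum_congr rfl fun n _ ↦ ?_
  rw [sum_mul]
  refine sum_congr rfl fun i hi ↦ ?_
  rw [Nat.add_sub_cancel' (Nat.lt_succ_iff.mp (mem_range.mp hi))]

/-- The coefficient `aᵢ` of `zⁱ` in `D̂_{d,ℓ}`; it is zero for `i > d`. -/
noncomputable def padeDenCoeff (d ℓ i : ℕ) : ℂ :=
  (-1) ^ i * d.choose i * (2 * d + ℓ - i).factorial / (2 * d + ℓ).factorial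

theorem Dhat_eq_sum_range (d ℓ N : ℕ) (hN : d < N) (z : ℂ) :
    Dhat d ℓ z = ∑ i ∈ range N, padeDenCoeff d ℓ i * z ^ i := by
  have hsub : range (d + 1) ⊆ range N := range_subset_range.mpr hN
  rw [← sum_subset hsub fun i _ hi ↦ ?_, Dhat, mul_sum]
  · refine sum_congr rfl fun i hi ↦ ?_
    rw [padeDenCoeff, Nat.cast_choose ℂ (Nat.lt_succ_iff.mp (mem_range.mp hi)), neg_pow]
    ring
  · rw [padeDenCoeff, Nat.choose_eq_zero_of_lt (by simpa using hi)]
    simp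

/-- The coefficient `cₙ` of `zⁿ` in `φ_ℓ D̂_{d,ℓ}`. -/
noncomputable def padeProdCoeff (d ℓ n : ℕ) : ℂ :=
  ∑ i ∈ range (n + 1), padeDenCoeff d ℓ i / (ℓ + (n - i)).factorial

theorem padeProdCoeff_of_le {d ℓ n : ℕ} (h : n ≤ d) :
    padeProdCoeff d ℓ n = ((d.factorial : ℂ) / ((2 * d + ℓ).factorial : ℂ)) *
      ∑ j ∈ range (n + 1),
        (((2 * d + ℓ - j).factorial : ℂ) * (-1 : ℂ) ^ j) /
          ((j.factorial : ℂ) * ((d - j).factorial : ℂ) * ((ℓ + n - j).factorial : ℂ)) := by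
  rw [padeProdCoeff, mul_sum]
  refine sum_congr rfl fun j hj ↦ ?_
  have hjn : j ≤ n := Nat.lt_succ_iff.mp (mem_range.mp hj)
  rw [padeDenCoeff, Nat.cast_choose ℂ (hjn.trans h), Nat.add_sub_assoc hjn]
  ring

theorem padeProdCoeff_eq_sum_of_le {d ℓ n : ℕ} (h : d ≤ n) :
    padeProdCoeff d ℓ n = (∑ i ∈ range (d + 1), (-1) ^ i * d.choose i *
      (((2 * d + ℓ - i).factorial : ℂ) / (ℓ + (n - i)).factorial)) / (2 * d + ℓ).factorial := by
  have hsub : range (d + 1) ⊆ range (n + 1) := range_subset_range.mpr (Nat.succ_le_succ h)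
  rw [padeProdCoeff, ← sum_subset hsub fun i _ hi ↦ ?_, sum_div]
  · refine sum_congr rfl fun i _ ↦ ?_
    rw [padeDenCoeff]
    ring
  · rw [padeDenCoeff, Nat.choose_eq_zero_of_lt (by simpa using hi)]
    simp

theorem padeProdCoeff_eq_zero {d ℓ n : ℕ} (h₁ : d < n) (h₂ : n ≤ 2 * d) :
    padeProdCoeff d ℓ n = 0 := by
  have hratio : ∀ i ∈ range (d + 1), ((2 * d + ℓ - i).factorial : ℂ) / (ℓ + (n - i)).factorial =
      (2 * d - n).factorial * ((d + ℓ + (d - i)).choose (2 * d - n) : ℂ) := by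
    intro i hi
    have hi : i ≤ d := Nat.lt_succ_iff.mp (mem_range.mp hi)
    have hfac := Nat.factorial_mul_descFactorial (show 2 * d - n ≤ 2 * d + ℓ - i by omega)
    rw [show 2 * d + ℓ - i - (2 * d - n) = ℓ + (n - i) by omega,
      Nat.descFactorial_eq_factorial_mul_choose] at hfac
    rw [← hfac, show d + ℓ + (d - i) = 2 * d + ℓ - i by omega, Nat.cast_mul,
      mul_div_cancel_left₀ _ (Nat.cast_ne_zero.2 (Nat.factorial_ne_zero _))]
    push_cast
    rfl
  rw [padeProdCoeff_eq_sum_of_le h₁.le, sum_congr rfl fun i hi ↦ by rw [hratio i hi]]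
  simp_rw [mul_left_comm _ ((2 * d - n).factorial : ℂ), ← mul_sum]
  rw [sum_range_alternating_choose_mul_eq_fwdDiff_iter (fun x ↦ (x.choose (2 * d - n) : ℂ)),
    fwdDiff_iter_natCast_choose_eq_zero (by omega)]
  simp

theorem padeProdCoeff_two_mul_add_one (d ℓ : ℕ) :
    padeProdCoeff d ℓ (2 * d + 1) =
      (-1 : ℂ) ^ d * (d.factorial : ℂ) * ((d + ℓ).factorial : ℂ) /
        (((2 * d + ℓ).factorial : ℂ) * ((2 * d + ℓ + 1).factorial : ℂ)) := by
  have hratio : ∀ i ∈ range (d + 1),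
      ((2 * d + ℓ - i).factorial : ℂ) / (ℓ + (2 * d + 1 - i)).factorial =
        (((d + ℓ + 1 + (d - i) : ℕ) : ℂ))⁻¹ := by
    intro i hi
    have hi : i ≤ d := Nat.lt_succ_iff.mp (mem_range.mp hi)
    rw [show ℓ + (2 * d + 1 - i) = 2 * d + ℓ - i + 1 by omega,
      show d + ℓ + 1 + (d - i) = 2 * d + ℓ - i + 1 by omega, Nat.factorial_succ]
    push_cast
    rw [div_mul_cancel_right₀ (Nat.cast_ne_zero.2 (Nat.factorial_ne_zero _))]
  rw [padeProdCoeff_eq_sum_of_le (by omega), sum_congr rfl fun i hi ↦ by rw [hratio i hi],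
    sum_range_alternating_choose_mul_eq_fwdDiff_iter (fun x : ℕ ↦ (x : ℂ)⁻¹),
    fwdDiff_iter_natCast_inv, show d + ℓ + d + 1 = 2 * d + ℓ + 1 by ring]
  ring

theorem sum_range_padeProdCoeff (d ℓ : ℕ) (z : ℂ) :
    ∑ n ∈ range (2 * d + 2), padeProdCoeff d ℓ n * z ^ n =
      Nhat d ℓ z + ((-1 : ℂ) ^ d * (d.factorial : ℂ) * ((d + ℓ).factorial : ℂ) /
        (((2 * d + ℓ).factorial : ℂ) * ((2 * d + ℓ + 1).factorial : ℂ))) * z ^ (2 * d + 1) := by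
  have hlow : ∑ n ∈ range (d + 1), padeProdCoeff d ℓ n * z ^ n = Nhat d ℓ z := by
    rw [Nhat, mul_sum]
    refine sum_congr rfl fun n hn ↦ ?_
    rw [padeProdCoeff_of_le (Nat.lt_succ_iff.mp (mem_range.mp hn)), mul_assoc]
  have hmid : ∑ x ∈ range d, padeProdCoeff d ℓ (d + 1 + x) * z ^ (d + 1 + x) = 0 :=
    sum_eq_zero fun x hx ↦ by
      rw [padeProdCoeff_eq_zero (by omega) (by simp at hx; omega), zero_mul]
  rw [show 2 * d + 2 = (d + 1) + (d + 1) by ring, sum_range_add, hlow, sum_range_succ, hmid,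
    zero_add, show d + 1 + d = 2 * d + 1 by ring, padeProdCoeff_two_mul_add_one]

theorem phiC_mul_Dhat_sub_Nhat (d ℓ : ℕ) (z : ℂ) :
    phiC ℓ z * Dhat d ℓ z - Nhat d ℓ z -
        ((-1 : ℂ) ^ d * (d.factorial : ℂ) * ((d + ℓ).factorial : ℂ) /
          (((2 * d + ℓ).factorial : ℂ) * ((2 * d + ℓ + 1).factorial : ℂ))) * z ^ (2 * d + 1) =
      z ^ (2 * d + 2) * ∑ i ∈ range (2 * d + 2),
        padeDenCoeff d ℓ i * phiC (ℓ + (2 * d + 2 - i)) z := by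
  rw [Dhat_eq_sum_range d ℓ (2 * d + 2) (by omega), phiC_mul_sum_range]
  simp only [← padeProdCoeff.eq_1, sum_range_padeProdCoeff]
  ring

/-- For all integers `d ≥ 0`, `ℓ ≥ 0`, the function
`z ↦ φ_ℓ(z)·D̂_{d,ℓ}(z) − N̂_{d,ℓ}(z) − ((−1)^d d!(d+ℓ)!/((2d+ℓ)!(2d+ℓ+1)!)) z^{2d+1}`
vanishes to order at least `2d+2` at `z = 0`. -/
theorem stmt5 (d ℓ : ℕ) :
    ∃ C > (0 : ℝ), ∃ δ > (0 : ℝ), ∀ z : ℂ, ‖z‖ ≤ δ →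
      ‖(phiC ℓ z * Dhat d ℓ z - Nhat d ℓ z -
          ((-1 : ℂ) ^ d * (d.factorial : ℂ) * ((d + ℓ).factorial : ℂ) /
            (((2 * d + ℓ).factorial : ℂ) * ((2 * d + ℓ + 1).factorial : ℂ))) * z ^ (2 * d + 1))‖
        ≤ C * ‖z‖ ^ (2 * d + 2) := by
  set S := ∑ i ∈ range (2 * d + 2), ‖padeDenCoeff d ℓ i‖
  refine ⟨S * Real.exp 1 + 1, by positivity, 1, one_pos, fun z hz ↦ ?_⟩
  have htail : ‖∑ i ∈ range (2 * d + 2), padeDenCoeff d ℓ i * phiC (ℓ + (2 * d + 2 - i)) z‖ ≤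
      S * Real.exp 1 := by
    refine (norm_sum_le _ _).trans ?_
    rw [sum_mul]
    refine sum_le_sum fun i _ ↦ ?_
    rw [norm_mul]
    gcongr
    exact (norm_phiC_le _ z).trans (Real.exp_le_exp.mpr hz)
  rw [phiC_mul_Dhat_sub_Nhat, norm_mul, norm_pow, mul_comm]
  gcongr
  linarith
end

section
/- Let d ≥ 0 be an integer and let 0 ≤ R < 2π. Then the series Σ_{i=2d+1}^∞ γ_i R^i converges, where γ_i := |Σ_{m=0}^{i−2d−1} (B_m/m!) · ((d+1)!/(1+i−m)!) · C(i−m−(d+1), d)|. -/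
/-!
Euler's evaluation of `ζ(2k)` bounds the Bernoulli part of every summand: `|B_m| / m! ≤ 4 / (2π)^m`.
The remaining factor `(d+1)! / (k+1)! · C(k-d-1, d)`, with `k = i - m`, is at most `2^k / (k-d)!`,
and the factorial absorbs any geometric growth, so it is `O_d(1 / (2π)^k)`. Hence
`γ_i = O_d(i / (2π)^i)` and the series is dominated by `Σ i (R / 2π)^i`.
-/

open Finset

/-- For integers `d ≥ 0` and `i ≥ 2d+1`,
`γ_i := |Σ_{m=0}^{i−2d−1} (B_m/m!)·((d+1)!/(1+i−m)!)·C(i−m−(d+1), d)|`,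
where `B_m` is the `m`-th Bernoulli number (convention `B_1 = −1/2`). -/
noncomputable def gammaCoeff (d i : ℕ) : ℝ :=
  |∑ m ∈ Finset.range (i - 2 * d),
      ((bernoulli m : ℝ) / (m.factorial : ℝ)) *
        (((d + 1).factorial : ℝ) / ((1 + i - m).factorial : ℝ)) *
        (((i - m - (d + 1)).choose d : ℕ) : ℝ)|

open Real Nat

lemma abs_bernoulli_two_mul_div_factorial_le {k : ℕ} (hk : k ≠ 0) :
    |(bernoulli (2 * k) : ℝ)| / (2 * k)! ≤ 4 / (2 * π) ^ (2 * k) := by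
  have hζ := hasSum_zeta_nat hk
  set S := (-1 : ℝ) ^ (k + 1) * 2 ^ (2 * k - 1) * π ^ (2 * k) * bernoulli (2 * k) / (2 * k)!
    with hS
  have hS_nonneg : 0 ≤ S := hasSum_le (fun n => by positivity) hasSum_zero hζ
  have hS_le : S ≤ π ^ 2 / 6 := by
    refine hasSum_le (fun n => ?_) hζ hasSum_zeta_two
    rcases n.eq_zero_or_pos with rfl | hn
    · simp [hk]
    · gcongr
      · exact_mod_cast hn
      · omega
  have hS_eq : |(bernoulli (2 * k) : ℝ)| / (2 * k)! * (2 * π) ^ (2 * k) = 2 * S := by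
    obtain ⟨j, rfl⟩ : ∃ j, k = j + 1 := ⟨k - 1, by omega⟩
    rw [← abs_of_nonneg hS_nonneg, hS, show 2 * (j + 1) - 1 = 2 * j + 1 by omega]
    simp only [abs_div, abs_mul, abs_pow, abs_neg, abs_one, one_pow, Nat.abs_cast, abs_two,
      abs_of_pos pi_pos]
    ring
  rw [le_div_iff₀ (by positivity), hS_eq]
  nlinarith [pi_lt_d2, pi_pos]

lemma abs_bernoulli_div_factorial_le (m : ℕ) :
    |(bernoulli m : ℝ)| / m ! ≤ 4 / (2 * π) ^ m := by
  rcases m.even_or_odd with ⟨k, rfl⟩ | hodd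
  · rcases eq_or_ne k 0 with rfl | hk
    · norm_num
    · rw [← two_mul]
      exact abs_bernoulli_two_mul_div_factorial_le hk
  · rcases (show m = 1 ∨ 1 < m by rcases hodd with ⟨j, rfl⟩; omega) with rfl | hm
    · rw [bernoulli_one, div_le_div_iff₀ (by positivity) (by positivity)]
      norm_num
      linarith [pi_le_four]
    · rw [bernoulli_eq_zero_of_odd hodd hm]
      simp only [Rat.cast_zero, abs_zero, zero_div]
      positivity

lemma factorial_mul_choose_mul_factorial_le {d k : ℕ} (h : d ≤ k) :
    (d + 1)! * (k - (d + 1)).choose d * (k - d)! ≤ 2 ^ k * (k + 1)! := by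
  have hfact : (d + 1)! * (k - d)! ≤ (k + 1)! := by
    have := Nat.factorial_mul_factorial_dvd_factorial_add (d + 1) (k - d)
    rw [show d + 1 + (k - d) = k + 1 by omega] at this
    exact Nat.le_of_dvd (factorial_pos _) this
  have hchoose : (k - (d + 1)).choose d ≤ 2 ^ k :=
    (choose_le_two_pow _ _).trans (Nat.pow_le_pow_right two_pos (by omega))
  calc (d + 1)! * (k - (d + 1)).choose d * (k - d)!
      = (k - (d + 1)).choose d * ((d + 1)! * (k - d)!) := by ring
    _ ≤ 2 ^ k * (k + 1)! := Nat.mul_le_mul hchoose hfact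

lemma pow_div_factorial_sub_le_pow_mul_exp {x : ℝ} (hx : 0 ≤ x) {d k : ℕ} (h : d ≤ k) :
    x ^ k / (k - d)! ≤ x ^ d * exp x := by
  rw [← Nat.add_sub_cancel' h, pow_add, mul_div_assoc, Nat.add_sub_cancel_left]
  gcongr
  exact Real.pow_div_factorial_le_exp _ hx _

lemma factorial_div_factorial_mul_choose_le {d k : ℕ} (h : d ≤ k) :
    ((d + 1)! / (k + 1)! : ℝ) * (k - (d + 1)).choose d ≤
      (4 * π) ^ d * exp (4 * π) / (2 * π) ^ k := by
  have hcomb : ((d + 1)! / (k + 1)! : ℝ) * (k - (d + 1)).choose d ≤ 2 ^ k / (k - d)! := by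
    rw [div_mul_eq_mul_div, div_le_div_iff₀ (by positivity) (by positivity)]
    exact_mod_cast factorial_mul_choose_mul_factorial_le h
  refine hcomb.trans ?_
  rw [le_div_iff₀ (by positivity), div_mul_eq_mul_div, ← mul_pow,
    show (2 : ℝ) * (2 * π) = 4 * π by ring]
  exact pow_div_factorial_sub_le_pow_mul_exp (by positivity) h

lemma abs_bernoulli_mul_choose_le (d m : ℕ) {k : ℕ} (h : d ≤ k) :
    |(bernoulli m : ℝ) / m ! * ((d + 1)! / (k + 1)!) * (k - (d + 1)).choose d| ≤
      4 * (4 * π) ^ d * exp (4 * π) / (2 * π) ^ (m + k) := by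
  rw [mul_assoc, abs_mul, abs_div, Nat.abs_cast,
    abs_of_nonneg (by positivity : (0 : ℝ) ≤ (d + 1)! / (k + 1)! * (k - (d + 1)).choose d)]
  calc |(bernoulli m : ℝ)| / m ! * ((d + 1)! / (k + 1)! * (k - (d + 1)).choose d)
      ≤ 4 / (2 * π) ^ m * ((4 * π) ^ d * exp (4 * π) / (2 * π) ^ k) := by
        gcongr ?_ * ?_
        · exact abs_bernoulli_div_factorial_le m
        · exact factorial_div_factorial_mul_choose_le h
    _ = 4 * (4 * π) ^ d * exp (4 * π) / (2 * π) ^ (m + k) := by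
        rw [pow_add]
        field_simp

lemma gammaCoeff_le (d i : ℕ) :
    gammaCoeff d i ≤ i * (4 * (4 * π) ^ d * exp (4 * π) / (2 * π) ^ i) := by
  refine (abs_sum_le_sum_abs _ _).trans ?_
  calc _ ≤ ∑ _m ∈ range (i - 2 * d), 4 * (4 * π) ^ d * exp (4 * π) / (2 * π) ^ i := by
        refine sum_le_sum fun m hm => ?_
        have hm : m < i - 2 * d := mem_range.mp hm
        have := abs_bernoulli_mul_choose_le d m (k := i - m) (by omega)
        rwa [Nat.add_sub_cancel' (by omega), show i - m + 1 = 1 + i - m by omega] at this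
    _ ≤ i * (4 * (4 * π) ^ d * exp (4 * π) / (2 * π) ^ i) := by
        rw [sum_const, card_range, nsmul_eq_mul]
        gcongr
        exact_mod_cast Nat.sub_le i (2 * d)

theorem summable_gammaCoeff_mul_pow (d : ℕ) {R : ℝ} (hR0 : 0 ≤ R) (hR : R < 2 * π) :
    Summable fun i => gammaCoeff d i * R ^ i := by
  have hq : ‖R / (2 * π)‖ < 1 := by
    rw [norm_of_nonneg (by positivity), div_lt_one (by positivity)]
    exact hR
  refine Summable.of_nonneg_of_le (fun i => mul_nonneg (abs_nonneg _) (pow_nonneg hR0 i))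
    (fun i => ?_) ((summable_pow_mul_geometric_of_norm_lt_one 1 hq).mul_left
      (4 * (4 * π) ^ d * exp (4 * π)))
  calc gammaCoeff d i * R ^ i
      ≤ i * (4 * (4 * π) ^ d * exp (4 * π) / (2 * π) ^ i) * R ^ i := by
        gcongr
        exact gammaCoeff_le d i
    _ = 4 * (4 * π) ^ d * exp (4 * π) * ((i : ℝ) ^ 1 * (R / (2 * π)) ^ i) := by
        rw [div_pow]
        field_simp

/-- Let `d ≥ 0` and `0 ≤ R < 2π`. Then the series `Σ_{i=2d+1}^∞ γ_i R^i` converges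
(the series is indexed by `i = n + (2d+1)`, `n ∈ ℕ`). -/
theorem stmt8 (d : ℕ) (R : ℝ) (hR0 : 0 ≤ R) (hR : R < 2 * Real.pi) :
    Summable (fun n : ℕ => gammaCoeff d (n + (2 * d + 1)) * R ^ (n + (2 * d + 1))) :=
  (summable_nat_add_iff (f := fun i => gammaCoeff d i * R ^ i) (2 * d + 1)).mpr (summable_gammaCoeff_mul_pow d hR0 hR)
end

section
/- For every integer ℓ ≥ 1 and every real number z ≤ 0, one has 0 < φ_ℓ(2z) and φ_ℓ(2z) ≤ φ_ℓ(z); in particular 0 ≤ φ_ℓ(2z)/φ_ℓ(z) ≤ 1. -/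
/-!
Termwise integration of `∫₀¹ s^ℓ (s x)^k ds = x^k / (ℓ + k + 1)` gives the recursion
`φ_{ℓ+1}(x) = ∫₀¹ s^ℓ φ_ℓ(s x) ds`, starting from `φ_0 = exp`. Positivity and monotonicity of
`exp` propagate through it to every `φ_ℓ`, and `2z ≤ z` for `z ≤ 0`.
-/

open intervalIntegral Set

/-- For an integer `ℓ ≥ 0` and real `x`, `φ_ℓ(x) := Σ_{k=0}^∞ x^k/(ℓ+k)!` (real valued). -/
noncomputable def phiR (ℓ : ℕ) (x : ℝ) : ℝ := ∑' k : ℕ, x ^ k / ((ℓ + k).factorial : ℝ)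

lemma norm_pow_div_factorial_add_le (ℓ k : ℕ) (x : ℝ) :
    ‖x ^ k / ((ℓ + k).factorial : ℝ)‖ ≤ |x| ^ k / k.factorial := by
  rw [norm_div, norm_pow, Real.norm_eq_abs, Real.norm_natCast]
  gcongr
  omega

lemma summable_pow_div_factorial_add (ℓ : ℕ) (x : ℝ) :
    Summable fun k : ℕ => x ^ k / ((ℓ + k).factorial : ℝ) :=
  (Real.summable_pow_div_factorial |x|).of_norm_bounded (norm_pow_div_factorial_add_le ℓ · x)

lemma phiR_zero : phiR 0 = Real.exp := by
  ext x
  simp [phiR, Real.exp_eq_exp_ℝ, NormedSpace.exp_eq_tsum_div]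

@[fun_prop]
lemma continuous_phiR (ℓ : ℕ) : Continuous (phiR ℓ) := by
  refine continuous_iff_continuousAt.2 fun x => ?_
  have hR : Icc (-(|x| + 1)) (|x| + 1) ∈ nhds x :=
    Icc_mem_nhds (by linarith [neg_abs_le x]) (by linarith [le_abs_self x])
  refine (continuousOn_tsum (fun k => by fun_prop) (Real.summable_pow_div_factorial (|x| + 1))
    fun k y hy => ?_).continuousAt hR
  refine (norm_pow_div_factorial_add_le ℓ k y).trans ?_
  gcongr
  exact abs_le.2 hy

lemma integral_pow_mul_pow_div_factorial_add (ℓ k : ℕ) (x : ℝ) :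
    ∫ s in (0 : ℝ)..1, s ^ ℓ * ((s * x) ^ k / (ℓ + k).factorial)
      = x ^ k / (ℓ + 1 + k).factorial := by
  have hfac : ((ℓ + 1 + k).factorial : ℝ) = (ℓ + k + 1) * (ℓ + k).factorial := by
    rw [show ℓ + 1 + k = ℓ + k + 1 by omega, Nat.factorial_succ]; push_cast; ring
  simp_rw [mul_pow, show ∀ s : ℝ, s ^ ℓ * (s ^ k * x ^ k / (ℓ + k).factorial)
    = x ^ k / (ℓ + k).factorial * s ^ (ℓ + k) from fun s => by ring]
  rw [integral_const_mul, integral_pow, hfac]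
  field_simp
  norm_num

lemma phiR_succ_eq_integral (ℓ : ℕ) (x : ℝ) :
    phiR (ℓ + 1) x = ∫ s in (0 : ℝ)..1, s ^ ℓ * phiR ℓ (s * x) := by
  rw [phiR, ← tsum_congr (integral_pow_mul_pow_div_factorial_add ℓ · x)]
  refine HasSum.tsum_eq ?_
  refine hasSum_integral_of_dominated_convergence (fun k _ => |x| ^ k / k.factorial)
    (fun k => by fun_prop) (fun k => ?_) ?_ ?_ ?_
  · refine Filter.Eventually.of_forall fun s hs => ?_
    rw [uIoc_of_le zero_le_one] at hs
    have hs1 : |s| ≤ 1 := abs_le.2 ⟨by linarith [hs.1], hs.2⟩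
    calc ‖s ^ ℓ * ((s * x) ^ k / (ℓ + k).factorial)‖
        = |s| ^ ℓ * ‖(s * x) ^ k / (ℓ + k).factorial‖ := by
          rw [norm_mul, norm_pow, Real.norm_eq_abs]
      _ ≤ 1 * (|s * x| ^ k / k.factorial) := by
          gcongr
          · exact pow_le_one₀ (abs_nonneg s) hs1
          · exact norm_pow_div_factorial_add_le ℓ k (s * x)
      _ ≤ |x| ^ k / k.factorial := by
          rw [one_mul, abs_mul]
          gcongr
          exact mul_le_of_le_one_left (abs_nonneg x) hs1
  · exact Filter.Eventually.of_forall fun _ _ => Real.summable_pow_div_factorial |x|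
  · exact intervalIntegrable_const
  · exact Filter.Eventually.of_forall fun s _ =>
      (summable_pow_div_factorial_add ℓ (s * x)).hasSum.mul_left (s ^ ℓ)

lemma phiR_pos (ℓ : ℕ) (x : ℝ) : 0 < phiR ℓ x := by
  induction ℓ generalizing x with
  | zero => exact phiR_zero ▸ Real.exp_pos x
  | succ ℓ ih =>
    rw [phiR_succ_eq_integral]
    exact intervalIntegral_pos_of_pos_on (Continuous.intervalIntegrable (by fun_prop) _ _)
      (fun s hs => mul_pos (pow_pos hs.1 ℓ) (ih _)) zero_lt_one

lemma phiR_monotone (ℓ : ℕ) : Monotone (phiR ℓ) := by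
  induction ℓ with
  | zero => exact phiR_zero ▸ Real.exp_monotone
  | succ ℓ ih =>
    intro x y hxy
    rw [phiR_succ_eq_integral, phiR_succ_eq_integral]
    exact integral_mono_on zero_le_one (Continuous.intervalIntegrable (by fun_prop) _ _)
      (Continuous.intervalIntegrable (by fun_prop) _ _) fun s hs =>
        mul_le_mul_of_nonneg_left (ih (mul_le_mul_of_nonneg_left hxy hs.1)) (pow_nonneg hs.1 ℓ)

theorem stmt11_general (ℓ : ℕ) (z : ℝ) (hz : z ≤ 0) :
    0 < phiR ℓ (2 * z) ∧ phiR ℓ (2 * z) ≤ phiR ℓ z ∧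
      0 ≤ phiR ℓ (2 * z) / phiR ℓ z ∧ phiR ℓ (2 * z) / phiR ℓ z ≤ 1 := by
  have h2z : phiR ℓ (2 * z) ≤ phiR ℓ z := phiR_monotone ℓ (by linarith)
  have hz_pos : 0 < phiR ℓ z := phiR_pos ℓ z
  have h2z_pos : 0 < phiR ℓ (2 * z) := phiR_pos ℓ (2 * z)
  exact ⟨h2z_pos, h2z, div_nonneg h2z_pos.le hz_pos.le, (div_le_one hz_pos).2 h2z⟩

/-- For every integer `ℓ ≥ 1` and every real `z ≤ 0`, one has `0 < φ_ℓ(2z)` and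
`φ_ℓ(2z) ≤ φ_ℓ(z)`; in particular `0 ≤ φ_ℓ(2z)/φ_ℓ(z) ≤ 1`. -/
theorem stmt11 (ℓ : ℕ) (hℓ : 1 ≤ ℓ) (z : ℝ) (hz : z ≤ 0) :
    0 < phiR ℓ (2 * z) ∧ phiR ℓ (2 * z) ≤ phiR ℓ z ∧
      0 ≤ phiR ℓ (2 * z) / phiR ℓ z ∧ phiR ℓ (2 * z) / phiR ℓ z ≤ 1 :=
  stmt11_general ℓ z hz
end

section
/- For every integer ℓ ≥ 1 and every real number z ≤ 0, |1 − φ_ℓ(2z)/φ_ℓ(z)| < 1/2. -/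
/-!
Put `ψ_ℓ(t) := t^ℓ φ_ℓ(-t)` (`scaledPhi ℓ t`). Since `x^ℓ φ_ℓ(x) = exp x - ∑_{j<ℓ} x^j/j!`, we have
`ψ_0(t) = e^{-t}`, `ψ_1(t) = 1 - e^{-t}`, `ψ_{ℓ+1}(0) = 0` and `ψ_{ℓ+1}' = ψ_ℓ`. Comparing
derivatives on `[0, ∞)`, induction on `ℓ` gives, for `t > 0`, `ψ_ℓ(t) > 0`,
`ψ_ℓ(2t) ≤ 2^ℓ ψ_ℓ(t)` and `2^ℓ ψ_{ℓ+1}(t) < ψ_{ℓ+1}(2t)`. Dividing by `(2t)^ℓ` this says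
`φ_ℓ(z) / 2 < φ_ℓ(2z) ≤ φ_ℓ(z)` for `z ≤ 0` and `ℓ ≥ 1`, so the ratio `φ_ℓ(2z) / φ_ℓ(z)` lies
in `(1/2, 1]`.
-/

open Finset Real Set
open scoped Nat

lemma pow_mul_phiR (ℓ : ℕ) (x : ℝ) :
    x ^ ℓ * phiR ℓ x = exp x - ∑ j ∈ range ℓ, x ^ j / j ! := by
  have htail := (hasSum_nat_add_iff' ℓ).2 (NormedSpace.expSeries_div_hasSum_exp x)
  rw [exp_eq_exp_ℝ, ← htail.tsum_eq, phiR, ← tsum_mul_left]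
  refine tsum_congr fun k => ?_
  rw [pow_add, add_comm ℓ k]
  ring

lemma phiR_zero_s13 (ℓ : ℕ) : phiR ℓ 0 = (ℓ ! : ℝ)⁻¹ := by
  rw [phiR, tsum_eq_single 0 fun k hk => by simp [zero_pow hk]]
  simp

lemma hasDerivAt_sum_range_succ_pow_div_factorial (n : ℕ) (x : ℝ) :
    HasDerivAt (fun y : ℝ => ∑ j ∈ range (n + 1), y ^ j / j !) (∑ j ∈ range n, x ^ j / j !) x := by
  have hterm : ∀ j ∈ range n,
      HasDerivAt (fun y : ℝ => y ^ (j + 1) / ((j + 1)! : ℝ)) (x ^ j / j !) x := by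
    intro j _
    refine ((hasDerivAt_pow (j + 1) x).div_const _).congr_deriv ?_
    rw [Nat.factorial_succ]
    push_cast
    field_simp
  simp_rw [sum_range_succ']
  simpa using (HasDerivAt.fun_sum hterm).add_const 1

lemma hasDerivAt_pow_mul_phiR (n : ℕ) (x : ℝ) :
    HasDerivAt (fun y => y ^ (n + 1) * phiR (n + 1) y) (x ^ n * phiR n x) x := by
  simp_rw [pow_mul_phiR]
  exact (hasDerivAt_exp x).sub (hasDerivAt_sum_range_succ_pow_div_factorial n x)

lemma le_of_hasDerivAt_le {f g f' g' : ℝ → ℝ} {a t : ℝ} (hf : ∀ x, HasDerivAt f (f' x) x)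
    (hg : ∀ x, HasDerivAt g (g' x) x) (ha : f a ≤ g a) (h' : ∀ x, a < x → f' x ≤ g' x)
    (ht : a ≤ t) : f t ≤ g t := by
  have hmono : MonotoneOn (fun x => g x - f x) (Ici a) :=
    monotoneOn_of_hasDerivWithinAt_nonneg (convex_Ici a)
      (fun x _ => ((hg x).sub (hf x)).continuousAt.continuousWithinAt)
      (fun x _ => ((hg x).sub (hf x)).hasDerivWithinAt)
      (fun x hx => sub_nonneg.2 (h' x (by simpa using hx)))
  linarith [hmono self_mem_Ici ht ht]

lemma lt_of_hasDerivAt_lt {f g f' g' : ℝ → ℝ} {a t : ℝ} (hf : ∀ x, HasDerivAt f (f' x) x)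
    (hg : ∀ x, HasDerivAt g (g' x) x) (ha : f a ≤ g a) (h' : ∀ x, a < x → f' x < g' x)
    (ht : a < t) : f t < g t := by
  have hmono : StrictMonoOn (fun x => g x - f x) (Ici a) :=
    strictMonoOn_of_hasDerivWithinAt_pos (convex_Ici a)
      (fun x _ => ((hg x).sub (hf x)).continuousAt.continuousWithinAt)
      (fun x _ => ((hg x).sub (hf x)).hasDerivWithinAt)
      (fun x hx => sub_pos.2 (h' x (by simpa using hx)))
  linarith [hmono self_mem_Ici ht.le ht]

noncomputable def scaledPhi (ℓ : ℕ) (t : ℝ) : ℝ := t ^ ℓ * phiR ℓ (-t)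

lemma scaledPhi_zero_left (t : ℝ) : scaledPhi 0 t = exp (-t) := by
  simpa [scaledPhi] using pow_mul_phiR 0 (-t)

lemma scaledPhi_one_left (t : ℝ) : scaledPhi 1 t = 1 - exp (-t) := by
  have := pow_mul_phiR 1 (-t)
  simp only [pow_one, range_one, sum_singleton, pow_zero, Nat.factorial_zero, Nat.cast_one,
    div_one] at this
  rw [scaledPhi, pow_one]
  linarith

lemma scaledPhi_succ_zero (ℓ : ℕ) : scaledPhi (ℓ + 1) 0 = 0 := by
  simp [scaledPhi]

lemma hasDerivAt_scaledPhi (n : ℕ) (t : ℝ) :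
    HasDerivAt (scaledPhi (n + 1)) (scaledPhi n t) t := by
  have hsign : ∀ k, scaledPhi k = fun t => (-1) ^ k * ((-t) ^ k * phiR k (-t)) := by
    intro k
    ext t
    rw [scaledPhi, ← mul_assoc, ← mul_pow]
    simp
  rw [hsign, hsign]
  exact (((hasDerivAt_pow_mul_phiR n (-t)).comp t (hasDerivAt_neg t)).const_mul
    ((-1 : ℝ) ^ (n + 1))).congr_deriv (by ring)

lemma scaledPhi_pos (ℓ : ℕ) {t : ℝ} (ht : 0 < t) : 0 < scaledPhi ℓ t := by
  induction ℓ generalizing t with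
  | zero => simpa [scaledPhi_zero_left] using exp_pos (-t)
  | succ n ih =>
    simpa [scaledPhi_succ_zero] using
      lt_of_hasDerivAt_lt (fun _ => hasDerivAt_const _ 0) (hasDerivAt_scaledPhi n)
        (scaledPhi_succ_zero n).ge (fun x hx => ih hx) ht

lemma hasDerivAt_scaledPhi_two_mul (n : ℕ) (t : ℝ) :
    HasDerivAt (fun x => scaledPhi (n + 1) (2 * x)) (2 * scaledPhi n (2 * t)) t :=
  ((hasDerivAt_scaledPhi n (2 * t)).comp t (hasDerivAt_const_mul 2)).congr_deriv
    (mul_comm _ _)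

lemma scaledPhi_two_mul_le (ℓ : ℕ) {t : ℝ} (ht : 0 ≤ t) :
    scaledPhi ℓ (2 * t) ≤ 2 ^ ℓ * scaledPhi ℓ t := by
  induction ℓ generalizing t with
  | zero => simpa [scaledPhi_zero_left] using exp_le_exp.2 (by linarith)
  | succ n ih =>
    refine le_of_hasDerivAt_le (hasDerivAt_scaledPhi_two_mul n)
      (fun x => (hasDerivAt_scaledPhi n x).const_mul (2 ^ (n + 1))) (by simp [scaledPhi_succ_zero])
      (fun x hx => ?_) ht
    rw [pow_succ]
    nlinarith [ih hx.le]

lemma lt_scaledPhi_two_mul (ℓ : ℕ) {t : ℝ} (ht : 0 < t) :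
    2 ^ ℓ * scaledPhi (ℓ + 1) t < scaledPhi (ℓ + 1) (2 * t) := by
  induction ℓ generalizing t with
  | zero =>
    simp only [pow_zero, one_mul, zero_add, scaledPhi_one_left]
    linarith [exp_lt_exp.2 (show -(2 * t) < -t by linarith)]
  | succ n ih =>
    refine lt_of_hasDerivAt_lt (fun x => (hasDerivAt_scaledPhi (n + 1) x).const_mul (2 ^ (n + 1)))
      (hasDerivAt_scaledPhi_two_mul (n + 1)) (by simp [scaledPhi_succ_zero])
      (fun x hx => ?_) ht
    rw [pow_succ]
    nlinarith [ih hx]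

lemma phiR_neg_eq_div (ℓ : ℕ) {t : ℝ} (ht : 0 < t) : phiR ℓ (-t) = scaledPhi ℓ t / t ^ ℓ := by
  rw [scaledPhi, mul_div_cancel_left₀ _ (pow_pos ht ℓ).ne']

lemma phiR_neg_pos (ℓ : ℕ) {t : ℝ} (ht : 0 ≤ t) : 0 < phiR ℓ (-t) := by
  rcases ht.eq_or_lt with rfl | ht
  · rw [neg_zero, phiR_zero_s13]
    positivity
  · rw [phiR_neg_eq_div ℓ ht]
    exact div_pos (scaledPhi_pos ℓ ht) (pow_pos ht ℓ)

lemma phiR_neg_two_mul_le (ℓ : ℕ) {t : ℝ} (ht : 0 ≤ t) : phiR ℓ (-(2 * t)) ≤ phiR ℓ (-t) := by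
  rcases ht.eq_or_lt with rfl | ht
  · rw [mul_zero]
  rw [phiR_neg_eq_div ℓ (by positivity : 0 < 2 * t), phiR_neg_eq_div ℓ ht]
  calc scaledPhi ℓ (2 * t) / (2 * t) ^ ℓ = scaledPhi ℓ (2 * t) / (2 ^ ℓ * t ^ ℓ) := by
        rw [mul_pow]
    _ ≤ 2 ^ ℓ * scaledPhi ℓ t / (2 ^ ℓ * t ^ ℓ) := by
        gcongr
        exact scaledPhi_two_mul_le ℓ ht.le
    _ = scaledPhi ℓ t / t ^ ℓ := by field_simp

lemma phiR_neg_lt_two_mul (ℓ : ℕ) {t : ℝ} (ht : 0 ≤ t) :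
    phiR (ℓ + 1) (-t) < 2 * phiR (ℓ + 1) (-(2 * t)) := by
  rcases ht.eq_or_lt with rfl | ht
  · rw [mul_zero]
    linarith [phiR_neg_pos (ℓ + 1) le_rfl]
  rw [phiR_neg_eq_div _ (by positivity : 0 < 2 * t), phiR_neg_eq_div _ ht]
  calc scaledPhi (ℓ + 1) t / t ^ (ℓ + 1)
      = 2 ^ ℓ * scaledPhi (ℓ + 1) t / (2 ^ ℓ * t ^ (ℓ + 1)) := by field_simp
    _ < scaledPhi (ℓ + 1) (2 * t) / (2 ^ ℓ * t ^ (ℓ + 1)) := by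
        gcongr
        exact lt_scaledPhi_two_mul ℓ ht
    _ = 2 * (scaledPhi (ℓ + 1) (2 * t) / (2 * t) ^ (ℓ + 1)) := by
        field_simp
        ring

/-- For every integer `ℓ ≥ 1` and every real `z ≤ 0`, `|1 − φ_ℓ(2z)/φ_ℓ(z)| < 1/2`. -/
theorem stmt13 (ℓ : ℕ) (hℓ : 1 ≤ ℓ) (z : ℝ) (hz : z ≤ 0) :
    |1 - phiR ℓ (2 * z) / phiR ℓ z| < 1 / 2 := by
  obtain ⟨n, rfl⟩ := Nat.exists_eq_add_of_le' hℓ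
  obtain ⟨t, ht, rfl⟩ : ∃ t, 0 ≤ t ∧ z = -t := ⟨-z, neg_nonneg.2 hz, (neg_neg z).symm⟩
  rw [mul_neg]
  have hpos := phiR_neg_pos (n + 1) ht
  have hle : phiR (n + 1) (-(2 * t)) / phiR (n + 1) (-t) ≤ 1 :=
    (div_le_one hpos).2 (phiR_neg_two_mul_le (n + 1) ht)
  have hgt : 1 / 2 < phiR (n + 1) (-(2 * t)) / phiR (n + 1) (-t) := by
    rw [lt_div_iff₀ hpos]
    linarith [phiR_neg_lt_two_mul n ht]
  rw [abs_sub_lt_iff]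
  constructor <;> linarith
end

section
/- For every complex number z = x + iy with x < 0, one has φ_1(z) ≠ 0 and |1 − φ_1(2z)/φ_1(z)| < 1. -/
open Complex

theorem mul_phiC_one (z : ℂ) : z * phiC 1 z = exp z - 1 := by
  have hs : Summable fun n : ℕ => z ^ n / (n.factorial : ℂ) :=
    NormedSpace.expSeries_div_summable z
  have hexp : exp z = 1 + ∑' n : ℕ, z ^ (n + 1) / ((n + 1).factorial : ℂ) := by
    rw [exp_eq_exp_ℂ, NormedSpace.exp_eq_tsum_div]
    exact (hs.tsum_eq_zero_add).trans (by simp)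
  rw [hexp, phiC, ← tsum_mul_left, add_sub_cancel_left]
  congr 1 with k
  rw [Nat.add_comm 1 k, pow_succ']
  ring

theorem phiC_one_zero : phiC 1 0 = 1 := by
  rw [phiC, tsum_eq_single 0 fun k hk => by simp [hk]]
  simp

theorem phiC_one_ne_zero {z : ℂ} (h : exp z ≠ 1) : phiC 1 z ≠ 0 := fun h0 =>
  h (sub_eq_zero.mp (by rw [← mul_phiC_one, h0, mul_zero]))

theorem phiC_one_two_mul (z : ℂ) : phiC 1 (2 * z) = phiC 1 z * (exp z + 1) / 2 := by
  rcases eq_or_ne z 0 with rfl | hz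
  · norm_num [phiC_one_zero]
  have h2z := mul_phiC_one (2 * z)
  rw [two_mul z, exp_add, ← two_mul] at h2z
  have hz' := mul_phiC_one z
  apply mul_left_cancel₀ (mul_ne_zero two_ne_zero hz)
  linear_combination h2z - (exp z + 1) * hz'

theorem one_sub_phiC_one_two_mul_div {z : ℂ} (h : phiC 1 z ≠ 0) :
    1 - phiC 1 (2 * z) / phiC 1 z = (1 - exp z) / 2 := by
  rw [phiC_one_two_mul]
  field_simp
  ring

theorem norm_exp_lt_one {z : ℂ} (hz : z.re < 0) : ‖exp z‖ < 1 := by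
  rw [norm_exp]
  exact Real.exp_lt_one_iff.mpr hz

theorem norm_one_sub_exp_lt_two {z : ℂ} (hz : z.re < 0) : ‖1 - exp z‖ < 2 := by
  have hE := norm_exp_lt_one hz
  calc ‖1 - exp z‖ ≤ ‖(1 : ℂ)‖ + ‖exp z‖ := norm_sub_le _ _
    _ < 2 := by rw [norm_one]; linarith

/-- For every complex `z = x + iy` with `x < 0`, one has `φ_1(z) ≠ 0` and
`|1 − φ_1(2z)/φ_1(z)| < 1`. -/
theorem stmt14 (z : ℂ) (hz : z.re < 0) :
    phiC 1 z ≠ 0 ∧ ‖1 - phiC 1 (2 * z) / phiC 1 z‖ < 1 := by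
  have hexp : exp z ≠ 1 := fun h => by simpa [h] using norm_exp_lt_one hz
  have hne : phiC 1 z ≠ 0 := phiC_one_ne_zero hexp
  refine ⟨hne, ?_⟩
  rw [one_sub_phiC_one_two_mul_div hne, norm_div, Complex.norm_two]
  linarith [norm_one_sub_exp_lt_two hz]
end

section
/- Let n ≥ 1, let M and X_0 be n×n complex matrices, and define the Newton–Schulz sequence X_{k+1} := 2X_k − X_k M X_k for k ≥ 0. If every eigenvalue of I − X_0 M has modulus strictly less than 1 (equivalently, the spectral radius of I − X_0 M is < 1), then M is invertible and the sequence (X_k) converges to M^{−1} (in any norm on the space of n×n complex matrices). -/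
/-!
The residual `E_k := 1 - X_k M` of the Newton–Schulz iteration squares at every step, so
`E_k = E_0 ^ (2 ^ k)`. By Gelfand's formula, `E_0 ^ m → 0` as soon as every eigenvalue of `E_0`
has modulus `< 1`; hence `X_k M → 1`. Since `1` is not an eigenvalue of `E_0`, the matrix
`X_0 M`, and with it `M`, is invertible, and `X_k = X_k M M⁻¹ → M⁻¹`.
-/

open Filter Topology

theorem tendsto_pow_atTop_nhds_zero_of_spectralRadius_lt_one {A : Type*} [NormedRing A]
    [NormedAlgebra ℂ A] [CompleteSpace A] {a : A} (h : spectralRadius ℂ a < 1) :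
    Tendsto (a ^ ·) atTop (𝓝 0) := by
  obtain ⟨r, hr, hr1⟩ := ENNReal.lt_iff_exists_nnreal_btwn.mp h
  have hbound : ∀ᶠ m : ℕ in atTop, ‖a ^ m‖₊ ≤ r ^ m := by
    filter_upwards [(spectrum.gelfand_formula a).eventually_lt_const hr,
      eventually_gt_atTop 0] with m hm hm0
    rw [one_div, ENNReal.rpow_inv_lt_iff (Nat.cast_pos.mpr hm0), ENNReal.rpow_natCast] at hm
    exact_mod_cast hm.le
  exact squeeze_zero_norm' (hbound.mono fun m hm => by exact_mod_cast hm)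
    (tendsto_pow_atTop_nhds_zero_of_lt_one r.coe_nonneg (by exact_mod_cast hr1))

theorem tendsto_pow_atTop_nhds_zero_of_forall_norm_lt_one {A : Type*} [NormedRing A]
    [NormedAlgebra ℂ A] [CompleteSpace A] {a : A} (h : ∀ z ∈ spectrum ℂ a, ‖z‖ < 1) :
    Tendsto (a ^ ·) atTop (𝓝 0) := by
  cases subsingleton_or_nontrivial A
  · exact tendsto_const_nhds.congr fun m => Subsingleton.elim _ _
  refine tendsto_pow_atTop_nhds_zero_of_spectralRadius_lt_one ?_
  exact_mod_cast spectrum.spectralRadius_lt_of_forall_lt a (r := 1) fun z hz => by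
    exact_mod_cast h z hz

theorem Matrix.tendsto_pow_atTop_nhds_zero_of_forall_norm_lt_one {n : Type*} [Fintype n]
    [DecidableEq n] {A : Matrix n n ℂ} (h : ∀ z ∈ spectrum ℂ A, ‖z‖ < 1) :
    Tendsto (A ^ ·) atTop (𝓝 0) := by
  let := Matrix.linftyOpNormedRing (n := n) (α := ℂ)
  let := Matrix.linftyOpNormedAlgebra (R := ℂ) (n := n) (α := ℂ)
  exact _root_.tendsto_pow_atTop_nhds_zero_of_forall_norm_lt_one h

theorem isUnit_of_one_notMem_spectrum_one_sub {R A : Type*} [CommSemiring R] [Ring A]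
    [Algebra R A] {a : A} (h : (1 : R) ∉ spectrum R (1 - a)) : IsUnit a := by
  simpa [spectrum.mem_iff] using h

section NewtonSchulz

variable {R : Type*} [Ring R]

theorem one_sub_newtonSchulz_step_mul (M X : R) :
    1 - (2 • X - X * M * X) * M = (1 - X * M) ^ 2 := by
  noncomm_ring

theorem one_sub_newtonSchulz_mul {M : R} {X : ℕ → R}
    (hrec : ∀ k, X (k + 1) = 2 • X k - X k * M * X k) (k : ℕ) :
    1 - X k * M = (1 - X 0 * M) ^ 2 ^ k := by
  induction k with
  | zero => rw [pow_zero, pow_one]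
  | succ k ih => rw [hrec, one_sub_newtonSchulz_step_mul, ih, ← pow_mul, pow_succ]

theorem tendsto_newtonSchulz_mul [TopologicalSpace R] [IsTopologicalRing R] {M : R}
    {X : ℕ → R} (hrec : ∀ k, X (k + 1) = 2 • X k - X k * M * X k)
    (hpow : Tendsto ((1 - X 0 * M) ^ ·) atTop (𝓝 0)) :
    Tendsto (X · * M) atTop (𝓝 1) := by
  have hres : Tendsto (1 - X · * M) atTop (𝓝 0) :=
    (hpow.comp (tendsto_pow_atTop_atTop_of_one_lt one_lt_two)).congr fun k =>
      (one_sub_newtonSchulz_mul hrec k).symm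
  simpa using (tendsto_const_nhds (x := (1 : R))).sub hres

end NewtonSchulz

theorem stmt18_general (n : ℕ) (M X₀ : Matrix (Fin n) (Fin n) ℂ)
    (X : ℕ → Matrix (Fin n) (Fin n) ℂ) (hX0 : X 0 = X₀)
    (hrec : ∀ k : ℕ, X (k + 1) = 2 • X k - X k * M * X k)
    (hspec : ∀ μ ∈ spectrum ℂ ((1 : Matrix (Fin n) (Fin n) ℂ) - X₀ * M), ‖μ‖ < 1) :
    IsUnit M ∧ Tendsto X atTop (nhds M⁻¹) := by
  subst hX0
  have hM : IsUnit M :=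
    isUnit_of_mul_isUnit_right <| isUnit_of_one_notMem_spectrum_one_sub (R := ℂ) fun h1 =>
      (hspec 1 h1).ne norm_one
  refine ⟨hM, ?_⟩
  have hXM : Tendsto (X · * M) atTop (𝓝 1) := tendsto_newtonSchulz_mul hrec
    (Matrix.tendsto_pow_atTop_nhds_zero_of_forall_norm_lt_one hspec)
  have hdet : IsUnit M.det := (Matrix.isUnit_iff_isUnit_det M).mp hM
  simpa [Matrix.mul_nonsing_inv_cancel_right M _ hdet] using hXM.mul_const M⁻¹

/-- Let `n ≥ 1`, let `M, X₀` be `n×n` complex matrices, and define the Newton–Schulz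
sequence `X_{k+1} := 2X_k − X_k M X_k`. If every eigenvalue of `I − X₀M` has modulus
strictly less than `1`, then `M` is invertible and `X_k → M⁻¹`. -/
theorem stmt18 (n : ℕ) (hn : 1 ≤ n) (M X₀ : Matrix (Fin n) (Fin n) ℂ)
    (X : ℕ → Matrix (Fin n) (Fin n) ℂ) (hX0 : X 0 = X₀)
    (hrec : ∀ k : ℕ, X (k + 1) = 2 • X k - X k * M * X k)
    (hspec : ∀ μ ∈ spectrum ℂ ((1 : Matrix (Fin n) (Fin n) ℂ) - X₀ * M), ‖μ‖ < 1) :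
    IsUnit M ∧ Tendsto X atTop (nhds M⁻¹) :=
  stmt18_general n M X₀ X hX0 hrec hspec
end
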